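/- arXiv:2204.12340 — 3 statements merged into one kernel-verified Lean document; each statement's English description precedes it below -/
import Mathlib

section
/- Let H be a d-dimensional affine subspace of ℝ^n and B a positive integer. Then the number of points of the discrete cube {1,...,B}^n lying in H is at most B^d. -/
/-- Lemma (affine counting): a `d`-dimensional affine subspace `H ⊆ ℝⁿ` contains at most
`B^d` points of the discrete cube `{1,…,B}ⁿ`. -/
theorem affine_cube_count (n d B : ℕ) (hB : 0 < B)
    (H : AffineSubspace ℝ (Fin n → ℝ))
    (hd : Module.finrank ℝ H.direction = d) :
    Set.ncard {x : Fin n → ℝ | x ∈ H ∧ ∀ i, ∃ k : ℤ, 1 ≤ k ∧ k ≤ (B : ℤ) ∧ x i = (k : ℝ)} ≤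
      B ^ d := by
  classical
  set V := H.direction with hV
  set φ : Fin n → Module.Dual ℝ V :=
    fun i => (LinearMap.proj i : (Fin n → ℝ) →ₗ[ℝ] ℝ).comp V.subtype with hφ
  -- the coordinate functionals restricted to V span the dual of V
  have hspan : Submodule.span ℝ (Set.range φ) = ⊤ := by
    have hproj : (fun i => (LinearMap.proj i : (Fin n → ℝ) →ₗ[ℝ] ℝ)) =
        ⇑(Pi.basisFun ℝ (Fin n)).dualBasis := by
      funext i
      apply LinearMap.ext
      intro x
      simp
    have h1 : Submodule.span ℝ
        (Set.range (fun i => (LinearMap.proj i : (Fin n → ℝ) →ₗ[ℝ] ℝ))) = ⊤ := by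
      rw [hproj]
      exact Module.Basis.span_eq _
    have hsurj : Function.Surjective V.subtype.dualMap :=
      LinearMap.dualMap_surjective_of_injective (Submodule.injective_subtype V)
    have hrange : Set.range φ =
        V.subtype.dualMap '' (Set.range (fun i => (LinearMap.proj i : (Fin n → ℝ) →ₗ[ℝ] ℝ))) := by
      rw [← Set.range_comp]
      rfl
    rw [hrange, Submodule.span_image, h1, Submodule.map_top, LinearMap.range_eq_top.mpr hsurj]
  obtain ⟨b, hbsub, hbspan, hbind⟩ := exists_linearIndependent ℝ (Set.range φ)
  rw [hspan] at hbspan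
  have hbfin : b.Finite := hbind.setFinite
  haveI : Fintype b := hbfin.fintype
  let bas : Module.Basis b ℝ (Module.Dual ℝ V) := Module.Basis.mk hbind (by rw [Subtype.range_coe, hbspan])
  have hcard : Fintype.card b = d := by
    have h1 := Module.finrank_eq_card_basis bas
    rw [Subspace.dual_finrank_eq, hd] at h1
    omega
  choose idx hidx using fun f : b => hbsub f.2
  -- key injectivity
  set A := {x : Fin n → ℝ | x ∈ H ∧ ∀ i, ∃ k : ℤ, 1 ≤ k ∧ k ≤ (B : ℤ) ∧ x i = (k : ℝ)} with hA
  have hkey : ∀ x ∈ A, ∀ y ∈ A, (∀ f : b, x (idx f) = y (idx f)) → x = y := by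
    intro x hx y hy hxy
    have hmem : x - y ∈ V := by
      have := AffineSubspace.vsub_mem_direction hx.1 hy.1
      simpa using this
    set w : V := ⟨x - y, hmem⟩ with hw
    have hall : ∀ g : Module.Dual ℝ V, g w = 0 := by
      intro g
      have hg : g ∈ Submodule.span ℝ b := by rw [hbspan]; trivial
      induction hg using Submodule.span_induction with
      | mem f hf =>
          have h1 := hidx ⟨f, hf⟩
          have h3 : φ (idx ⟨f, hf⟩) w = 0 := by
            show ((x - y) (idx ⟨f, hf⟩) : ℝ) = 0
            simp [hxy ⟨f, hf⟩]
          rw [h1] at h3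
          exact h3
      | zero => simp
      | add f g _ _ hf hg => simp [hf, hg]
      | smul c f _ hf => simp [hf]
    have hw0 : w = 0 := (Module.forall_dual_apply_eq_zero_iff ℝ w).mp hall
    have : x - y = 0 := by
      have := congrArg (Subtype.val) hw0
      exact this
    exact sub_eq_zero.mp this
  -- now count via the floor map on the chosen coordinates
  have hmaps : ∀ x ∈ A, (fun f : b => ⌊x (idx f)⌋) ∈
      ↑(Fintype.piFinset fun _ : b => Finset.Icc (1 : ℤ) (B : ℤ)) := by
    intro x hx
    simp only [Finset.mem_coe, Fintype.mem_piFinset, Finset.mem_Icc]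
    intro f
    obtain ⟨k, hk1, hk2, hk3⟩ := hx.2 (idx f)
    rw [hk3, Int.floor_intCast]
    exact ⟨hk1, hk2⟩
  have hinj : Set.InjOn (fun x => fun f : b => ⌊x (idx f)⌋) A := by
    intro x hx y hy hxy
    apply hkey x hx y hy
    intro f
    obtain ⟨k, _, _, hk3⟩ := hx.2 (idx f)
    obtain ⟨l, _, _, hl3⟩ := hy.2 (idx f)
    have : ⌊x (idx f)⌋ = ⌊y (idx f)⌋ := congrFun hxy f
    rw [hk3, hl3, Int.floor_intCast, Int.floor_intCast] at this
    rw [hk3, hl3, this]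
  have hle := Set.ncard_le_ncard_of_injOn
    (t := ↑(Fintype.piFinset fun _ : b => Finset.Icc (1 : ℤ) (B : ℤ)))
    _ hmaps hinj (Finset.finite_toSet _)
  rw [Set.ncard_coe_finset] at hle
  calc A.ncard ≤ _ := hle
    _ ≤ B ^ d := by
        rw [Fintype.card_piFinset]
        simp [Int.card_Icc, hcard]
end

section
/- Suppose e ∈ {0,1}^n solves the subset sum problem with target B₀ = ∑ᵢBᵢeᵢ, and suppose B₁,...,Bₙ are i.i.d. uniform on {1,...,B} with B = 2^{(1/2+ε)n²}. Then for n sufficiently large (depending on ε), with probability at least 1 − 2^{−εn²/2}, every nonzero integer vector x = (x₀; x'₀; x₁;...;xₙ) in the lattice generated by the augmented matrix (first row (B₀,−B₁,...,−Bₙ), identity below) with ‖x‖ ≤ 2·2^{n/2}n^{1/2} is an integer multiple of (0; 1; e). -/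
open scoped Classical


lemma count_fixed_w {n : ℕ} (B : ℕ) (M : ℤ) (w : Fin n → ℤ) (hw : w ≠ 0) :
    ((Fintype.piFinset fun _ : Fin n => Finset.Icc (1 : ℤ) (B : ℤ)).filter
      (fun b => |∑ i, b i * w i| ≤ M)).card ≤ (2 * M + 1).toNat * B ^ (n - 1) := by
  obtain ⟨j, hj⟩ : ∃ j, w j ≠ 0 := by
    by_contra h; push_neg at h; exact hw (funext h)
  set T : Finset (Fin n → ℤ) :=
    Fintype.piFinset fun i => if i = j then Finset.Icc (-M) M else Finset.Icc (1 : ℤ) (B : ℤ)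
    with hT
  have hTcard : T.card = (2 * M + 1).toNat * B ^ (n - 1) := by
    rw [hT, Fintype.card_piFinset]
    rw [← Finset.mul_prod_erase Finset.univ _ (Finset.mem_univ j), if_pos rfl]
    have h1 : (Finset.Icc (-M) M).card = (2 * M + 1).toNat := by
      rw [Int.card_Icc]; ring_nf
    have h2 : ∀ i ∈ Finset.univ.erase j,
        ((if i = j then Finset.Icc (-M) M else Finset.Icc (1 : ℤ) (B : ℤ))).card = B := by
      intro i hi
      rw [if_neg (Finset.ne_of_mem_erase hi), Int.card_Icc]
      simp
    rw [Finset.prod_congr rfl h2, Finset.prod_const, h1, Finset.card_erase_of_mem (Finset.mem_univ j)]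
    simp
  rw [← hTcard]
  apply Finset.card_le_card_of_injOn (fun b => Function.update b j (∑ i, b i * w i))
  · intro b hb
    simp only [Finset.mem_coe, Finset.mem_filter, Fintype.mem_piFinset] at hb
    rw [Finset.mem_coe, hT, Fintype.mem_piFinset]
    intro i
    beta_reduce
    by_cases hij : i = j
    · subst hij
      rw [if_pos rfl, Function.update_self, Finset.mem_Icc]
      exact abs_le.mp hb.2
    · rw [if_neg hij, Function.update_of_ne hij]
      exact hb.1 i
  · intro b hb b' hb' heq
    simp only at heq
    have hoff : ∀ i, i ≠ j → b i = b' i := by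
      intro i hij
      have := congrFun heq i
      rwa [Function.update_of_ne hij, Function.update_of_ne hij] at this
    have hsum : ∑ i, b i * w i = ∑ i, b' i * w i := by
      have := congrFun heq j
      rwa [Function.update_self, Function.update_self] at this
    have hbj : b j = b' j := by
      rw [← Finset.add_sum_erase Finset.univ _ (Finset.mem_univ j),
        ← Finset.add_sum_erase Finset.univ (fun i => b' i * w i) (Finset.mem_univ j)] at hsum
      have hrest : ∑ i ∈ Finset.univ.erase j, b i * w i
          = ∑ i ∈ Finset.univ.erase j, b' i * w i :=
        Finset.sum_congr rfl fun i hi => by rw [hoff i (Finset.ne_of_mem_erase hi)]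
      have : b j * w j = b' j * w j := by omega
      exact mul_right_cancel₀ hj this
    funext i
    by_cases hij : i = j
    · subst hij; exact hbj
    · exact hoff i hij



lemma bad_card {n : ℕ} (B : ℕ) (M : ℤ) :
    ((Fintype.piFinset fun _ : Fin n => Finset.Icc (1 : ℤ) (B : ℤ)).filter
      (fun b => ∃ w : Fin n → ℤ, w ≠ 0 ∧ (∀ i, |w i| ≤ 2 * M) ∧ |∑ i, b i * w i| ≤ M)).card
    ≤ (4 * M + 1).toNat ^ n * ((2 * M + 1).toNat * B ^ (n - 1)) := by
  classical
  set W : Finset (Fin n → ℤ) :=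
    (Fintype.piFinset fun _ : Fin n => Finset.Icc (-(2 * M)) (2 * M)).erase 0 with hW
  set S : Finset (Fin n → ℤ) := Fintype.piFinset fun _ : Fin n => Finset.Icc (1 : ℤ) (B : ℤ)
  have hsub : S.filter
      (fun b => ∃ w : Fin n → ℤ, w ≠ 0 ∧ (∀ i, |w i| ≤ 2 * M) ∧ |∑ i, b i * w i| ≤ M)
      ⊆ W.biUnion (fun w => S.filter (fun b => |∑ i, b i * w i| ≤ M)) := by
    intro b hb
    simp only [Finset.mem_filter] at hb
    obtain ⟨hbS, w, hw0, hwb, hws⟩ := hb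
    refine Finset.mem_biUnion.mpr ⟨w, ?_, Finset.mem_filter.mpr ⟨hbS, hws⟩⟩
    rw [hW, Finset.mem_erase]
    refine ⟨hw0, Fintype.mem_piFinset.mpr fun i => Finset.mem_Icc.mpr (abs_le.mp (hwb i))⟩
  calc _ ≤ (W.biUnion (fun w => S.filter (fun b => |∑ i, b i * w i| ≤ M))).card :=
        Finset.card_le_card hsub
    _ ≤ ∑ w ∈ W, (S.filter (fun b => |∑ i, b i * w i| ≤ M)).card := Finset.card_biUnion_le
    _ ≤ ∑ _w ∈ W, (2 * M + 1).toNat * B ^ (n - 1) := by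
        apply Finset.sum_le_sum
        intro w hw
        exact count_fixed_w B M w (Finset.ne_of_mem_erase hw)
    _ = W.card * ((2 * M + 1).toNat * B ^ (n - 1)) := by rw [Finset.sum_const, smul_eq_mul]
    _ ≤ (4 * M + 1).toNat ^ n * ((2 * M + 1).toNat * B ^ (n - 1)) := by
        apply Nat.mul_le_mul_right
        calc W.card ≤ (Fintype.piFinset fun _ : Fin n => Finset.Icc (-(2 * M)) (2 * M)).card :=
              Finset.card_le_card (Finset.erase_subset _ _)
          _ = (4 * M + 1).toNat ^ n := by
              rw [Fintype.card_piFinset]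
              have : (Finset.Icc (-(2 * M)) (2 * M)).card = (4 * M + 1).toNat := by
                rw [Int.card_Icc]; ring_nf
              simp [this]


lemma exists_bad_w {n : ℕ} (b e : Fin n → ℤ) (he : ∀ i, e i = 0 ∨ e i = 1)
    (R : ℝ) (M : ℤ) (hMR : M = ⌊R⌋)
    (h : ¬ ∀ v : Fin (n + 2) → ℤ,
        v 0 = (∑ i, b i * e i) * v 1 - ∑ i : Fin n, b i * v i.succ.succ →
        v ≠ 0 →
        Real.sqrt (∑ j, ((v j : ℤ) : ℝ) ^ 2) ≤ R →
        ∃ k : ℤ, v = k • (Fin.cons 0 (Fin.cons 1 e) : Fin (n + 2) → ℤ)) :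
    ∃ w : Fin n → ℤ, w ≠ 0 ∧ (∀ i, |w i| ≤ 2 * M) ∧ |∑ i, b i * w i| ≤ M := by
  push_neg at h
  obtain ⟨v, h0, hne, hnorm, hnk⟩ := h
  have habs : ∀ j, |v j| ≤ M := by
    intro j
    rw [hMR, Int.le_floor]
    push_cast
    have h1 : ((v j : ℝ)) ^ 2 ≤ ∑ j', ((v j' : ℝ)) ^ 2 :=
      Finset.single_le_sum (f := fun j' => ((v j' : ℝ)) ^ 2) (fun _ _ => sq_nonneg _)
        (Finset.mem_univ j)
    calc |(v j : ℝ)| = Real.sqrt ((v j : ℝ) ^ 2) := (Real.sqrt_sq_eq_abs _).symm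
      _ ≤ Real.sqrt (∑ j', ((v j' : ℝ)) ^ 2) := Real.sqrt_le_sqrt h1
      _ ≤ R := hnorm
  refine ⟨fun i => v 1 * e i - v i.succ.succ, ?_, ?_, ?_⟩
  · intro hw
    apply hnk (v 1)
    funext j
    refine Fin.cases ?_ (fun j' => Fin.cases ?_ (fun i => ?_) j') j
    · have hws : ∀ i : Fin n, v i.succ.succ = v 1 * e i := by
        intro i
        have := congrFun hw i
        simp only [Pi.zero_apply] at this
        linarith
      have hsum : ∑ i, b i * v i.succ.succ = (∑ i, b i * e i) * v 1 := by
        rw [Finset.sum_mul]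
        exact Finset.sum_congr rfl fun i _ => by rw [hws i]; ring
      have : v 0 = 0 := by rw [h0, hsum]; ring
      simpa [Fin.cons_zero] using this
    · simp [Fin.cons_succ, Fin.cons_zero]
    · have := congrFun hw i
      simp only [Pi.zero_apply] at this
      simp only [Pi.smul_apply, Fin.cons_succ, smul_eq_mul]
      linarith
  · intro i
    have h1 : |v 1| ≤ M := habs 1
    have h2 : |v i.succ.succ| ≤ M := habs _
    have h3 : |e i| ≤ 1 := by rcases he i with h | h <;> simp [h]
    calc |v 1 * e i - v i.succ.succ| ≤ |v 1 * e i| + |v i.succ.succ| := abs_sub _ _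
      _ ≤ |v 1| * |e i| + M := by rw [abs_mul]; exact add_le_add_right h2 _
      _ ≤ M * 1 + M := add_le_add_left
          (mul_le_mul h1 h3 (abs_nonneg _) (le_trans (abs_nonneg _) h1)) _
      _ = 2 * M := by ring
  · have hwsum : ∑ i, b i * (v 1 * e i - v i.succ.succ) = v 0 := by
      rw [h0]
      simp only [mul_sub]
      rw [Finset.sum_sub_distrib]
      congr 1
      rw [Finset.sum_mul]
      exact Finset.sum_congr rfl fun i _ => by ring
    rw [hwsum]
    exact habs 0


lemma key_bound (ε : ℝ) (hε : 0 < ε) : ∃ n₀ : ℕ, 1 ≤ n₀ ∧ ∀ n : ℕ, n₀ ≤ n →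
    (4 * ((⌊(2 * (2:ℝ) ^ ((n:ℝ)/2) * (n:ℝ) ^ ((1:ℝ)/2))⌋ : ℤ) : ℝ) + 1) ^ n *
      (2 * ((⌊(2 * (2:ℝ) ^ ((n:ℝ)/2) * (n:ℝ) ^ ((1:ℝ)/2))⌋ : ℤ) : ℝ) + 1)
    ≤ (2:ℝ) ^ ((1/2 + ε/2) * (n:ℝ)^2) := by
  refine ⟨⌈(24/ε)^2⌉₊ + 1, le_add_self, fun n hn => ?_⟩
  set x : ℝ := (n : ℝ) with hxdef
  have hx1 : 1 ≤ x := by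
    have h : 1 ≤ n := le_trans (Nat.le_add_left 1 _) hn
    rw [hxdef]
    exact_mod_cast h
  have hx0 : (0:ℝ) < x := by linarith
  set s : ℝ := x ^ ((1:ℝ)/2) with hsdef
  have hs0 : 0 < s := Real.rpow_pos_of_pos hx0 _
  have hss : s * s = x := by
    rw [hsdef, ← Real.rpow_add hx0]
    norm_num
  have hs1 : 1 ≤ s := by
    calc (1:ℝ) = 1 ^ ((1:ℝ)/2) := (Real.one_rpow _).symm
      _ ≤ x ^ ((1:ℝ)/2) := Real.rpow_le_rpow zero_le_one hx1 (by norm_num)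
  have h24 : 24 ≤ ε * s := by
    have hxge : (24/ε)^2 ≤ x := by
      have h1 : ((24/ε)^2 : ℝ) ≤ ⌈(24/ε)^2⌉₊ := Nat.le_ceil _
      have h2 : (⌈(24/ε)^2⌉₊ : ℝ) ≤ (n : ℝ) := by
        exact_mod_cast le_trans (Nat.le_succ _) hn
      linarith
    have hsge : 24/ε ≤ s := by
      have h1 : ((24/ε)^2) ^ ((1:ℝ)/2) ≤ x ^ ((1:ℝ)/2) :=
        Real.rpow_le_rpow (sq_nonneg _) hxge (by norm_num)
      have h2 : ((24/ε)^2 : ℝ) ^ ((1:ℝ)/2) = 24/ε := by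
        rw [← Real.rpow_natCast (24/ε) 2, ← Real.rpow_mul (by positivity)]
        norm_num
      rw [h2] at h1
      exact h1
    calc (24:ℝ) = (24/ε) * ε := by field_simp
      _ ≤ s * ε := mul_le_mul_of_nonneg_right hsge hε.le
      _ = ε * s := mul_comm _ _
  set R : ℝ := 2 * (2:ℝ) ^ (x/2) * s with hRdef
  have h2pow1 : (1:ℝ) ≤ (2:ℝ) ^ (x/2) := by
    rw [show (1:ℝ) = (2:ℝ) ^ (0:ℝ) from (Real.rpow_zero 2).symm]
    exact Real.rpow_le_rpow_of_exponent_le one_le_two (by linarith)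
  have hR1 : 1 ≤ R := by
    rw [hRdef]
    nlinarith
  have hMR : ((⌊R⌋ : ℤ) : ℝ) ≤ R := Int.floor_le R
  set g : ℝ := x/2 + 4 + 3/2 * s with hgdef
  have hsle : s ≤ (2:ℝ) ^ ((3:ℝ)/2 * s) := by
    rw [Real.rpow_def_of_pos two_pos]
    nth_rewrite 1 [← Real.exp_log hs0]
    apply Real.exp_le_exp.mpr
    have hlog : Real.log s ≤ s - 1 := Real.log_le_sub_one_of_pos hs0
    have hl2 : (0.6931471803 : ℝ) < Real.log 2 := Real.log_two_gt_d9
    nlinarith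
  have h5R : 5 * R ≤ (2:ℝ) ^ g := by
    have : 5 * R ≤ 2 ^ (4:ℝ) * (2:ℝ) ^ (x/2) * s := by
      rw [hRdef, show ((2:ℝ) ^ (4:ℝ)) = 16 by norm_num]
      nlinarith [hs0.le, h2pow1]
    calc 5 * R ≤ 2 ^ (4:ℝ) * (2:ℝ) ^ (x/2) * s := this
      _ ≤ 2 ^ (4:ℝ) * (2:ℝ) ^ (x/2) * (2:ℝ) ^ ((3:ℝ)/2 * s) := by
          apply mul_le_mul_of_nonneg_left hsle
          positivity
      _ = (2:ℝ) ^ g := by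
          rw [← Real.rpow_add two_pos, ← Real.rpow_add two_pos, hgdef]
          ring_nf
  have h4M : 4 * ((⌊R⌋ : ℤ) : ℝ) + 1 ≤ (2:ℝ) ^ g := by
    calc 4 * ((⌊R⌋ : ℤ) : ℝ) + 1 ≤ 4 * R + R := by linarith
      _ = 5 * R := by ring
      _ ≤ _ := h5R
  have h2M : 2 * ((⌊R⌋ : ℤ) : ℝ) + 1 ≤ (2:ℝ) ^ g := by
    calc 2 * ((⌊R⌋ : ℤ) : ℝ) + 1 ≤ 2 * R + R := by linarith
      _ ≤ 5 * R := by linarith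
      _ ≤ _ := h5R
  have hM0 : 0 ≤ 4 * ((⌊R⌋ : ℤ) : ℝ) + 1 := by
    have : (1:ℤ) ≤ ⌊R⌋ := by
      rw [Int.le_floor]; exact_mod_cast hR1
    have : (1:ℝ) ≤ ((⌊R⌋ : ℤ) : ℝ) := by exact_mod_cast this
    linarith
  have hprod : (4 * ((⌊R⌋ : ℤ) : ℝ) + 1) ^ n * (2 * ((⌊R⌋ : ℤ) : ℝ) + 1)
      ≤ (2:ℝ) ^ (g * (x + 1)) := by
    have h1 : (4 * ((⌊R⌋ : ℤ) : ℝ) + 1) ^ n ≤ ((2:ℝ) ^ g) ^ n :=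
      pow_le_pow_left₀ hM0 h4M n
    have h2 : ((2:ℝ) ^ g) ^ n = (2:ℝ) ^ (g * x) := by
      rw [← Real.rpow_natCast ((2:ℝ) ^ g) n, ← Real.rpow_mul (by norm_num : (0:ℝ) ≤ 2)]
    have h3 : (0:ℝ) ≤ 2 * ((⌊R⌋ : ℤ) : ℝ) + 1 := by linarith
    calc (4 * ((⌊R⌋ : ℤ) : ℝ) + 1) ^ n * (2 * ((⌊R⌋ : ℤ) : ℝ) + 1)
        ≤ (2:ℝ) ^ (g * x) * (2:ℝ) ^ g := by
          apply mul_le_mul (h2 ▸ h1) h2M h3 (by positivity)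
      _ = (2:ℝ) ^ (g * (x + 1)) := by
          rw [← Real.rpow_add two_pos]; ring_nf
  refine le_trans hprod (Real.rpow_le_rpow_of_exponent_le one_le_two ?_)
  have hx : x = s * s := hss.symm
  rw [hgdef, hx]
  nlinarith [sq_nonneg s, mul_le_mul_of_nonneg_right h24 (by positivity : (0:ℝ) ≤ s^3),
    pow_pos hs0 3, pow_pos hs0 2, hs1]


/-- Main theorem (no flip, no big constant): with `B = 2^((1/2+ε)n²)` and `B₁,…,Bₙ` i.i.d.
uniform on `{1,…,B}`, for `n` large, with probability at least `1 - 2^(-εn²/2)` every nonzero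
vector of the augmented lattice of norm at most `2·2^(n/2)·n^(1/2)` is an integer multiple of
`(0; 1; e)`. -/
theorem subset_sum_lattice_success (ε : ℝ) (hε : 0 < ε) :
    ∃ n₀ : ℕ, ∀ n : ℕ, n₀ ≤ n →
      ∀ e : Fin n → ℤ, (∀ i, e i = 0 ∨ e i = 1) →
      ∀ B : ℕ, (B : ℝ) = (2 : ℝ) ^ ((1 / 2 + ε) * (n : ℝ) ^ 2) →
      (1 : ℝ) - (2 : ℝ) ^ (-(ε * (n : ℝ) ^ 2) / 2) ≤
        ((Finset.filter (fun b : Fin n → ℤ =>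
            ∀ v : Fin (n + 2) → ℤ,
              v 0 = (∑ i, b i * e i) * v 1 - ∑ i : Fin n, b i * v i.succ.succ →
              v ≠ 0 →
              Real.sqrt (∑ j, ((v j : ℤ) : ℝ) ^ 2) ≤
                2 * (2 : ℝ) ^ ((n : ℝ) / 2) * (n : ℝ) ^ ((1 : ℝ) / 2) →
              ∃ k : ℤ, v = k • (Fin.cons 0 (Fin.cons 1 e) : Fin (n + 2) → ℤ))
          (Fintype.piFinset fun _ : Fin n => Finset.Icc (1 : ℤ) (B : ℤ))).card : ℝ) /
          (B : ℝ) ^ n := by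
  obtain ⟨n₀, hn₀1, hkey⟩ := key_bound ε hε
  refine ⟨n₀, fun n hn e he B hB => ?_⟩
  have hn1 : 1 ≤ n := le_trans hn₀1 hn
  have hx1 : (1:ℝ) ≤ (n:ℝ) := by exact_mod_cast hn1
  set R : ℝ := 2 * (2:ℝ) ^ ((n:ℝ)/2) * (n:ℝ) ^ ((1:ℝ)/2) with hRdef
  set M : ℤ := ⌊R⌋ with hMdef
  set S : Finset (Fin n → ℤ) := Fintype.piFinset fun _ : Fin n => Finset.Icc (1:ℤ) (B:ℤ)
    with hSdef
  set P : (Fin n → ℤ) → Prop := fun b =>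
    ∀ v : Fin (n + 2) → ℤ,
      v 0 = (∑ i, b i * e i) * v 1 - ∑ i : Fin n, b i * v i.succ.succ →
      v ≠ 0 →
      Real.sqrt (∑ j, ((v j : ℤ) : ℝ) ^ 2) ≤ R →
      ∃ k : ℤ, v = k • (Fin.cons 0 (Fin.cons 1 e) : Fin (n + 2) → ℤ) with hPdef
  -- basic positivity facts
  have hBR1 : (1:ℝ) ≤ (B:ℝ) := by
    rw [hB, show (1:ℝ) = (2:ℝ) ^ (0:ℝ) from (Real.rpow_zero 2).symm]
    exact Real.rpow_le_rpow_of_exponent_le one_le_two (by positivity)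
  have hBpos : (0:ℝ) < (B:ℝ) ^ n := by positivity
  have hR1 : (1:ℝ) ≤ R := by
    have h1 : (1:ℝ) ≤ (2:ℝ) ^ ((n:ℝ)/2) := by
      rw [show (1:ℝ) = (2:ℝ) ^ (0:ℝ) from (Real.rpow_zero 2).symm]
      exact Real.rpow_le_rpow_of_exponent_le one_le_two (by linarith)
    have h2 : (1:ℝ) ≤ (n:ℝ) ^ ((1:ℝ)/2) := by
      calc (1:ℝ) = 1 ^ ((1:ℝ)/2) := (Real.one_rpow _).symm
        _ ≤ (n:ℝ) ^ ((1:ℝ)/2) := Real.rpow_le_rpow zero_le_one hx1 (by norm_num)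
    rw [hRdef]; nlinarith
  have hM1 : (1:ℤ) ≤ M := by
    rw [hMdef, Int.le_floor]; exact_mod_cast hR1
  -- counting
  have hScard : S.card = B ^ n := by
    rw [hSdef, Fintype.card_piFinset]
    have : (Finset.Icc (1:ℤ) (B:ℤ)).card = B := by
      rw [Int.card_Icc]; simp
    simp [this]
  have hsplit : (S.filter P).card + (S.filter (fun b => ¬ P b)).card = B ^ n := by
    rw [Finset.card_filter_add_card_filter_not, hScard]
  have hsub : S.filter (fun b => ¬ P b) ⊆ S.filter
      (fun b => ∃ w : Fin n → ℤ, w ≠ 0 ∧ (∀ i, |w i| ≤ 2 * M) ∧ |∑ i, b i * w i| ≤ M) := by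
    intro b hb
    rw [Finset.mem_filter] at hb ⊢
    exact ⟨hb.1, exists_bad_w b e he R M hMdef hb.2⟩
  have hbadcard : (S.filter (fun b => ¬ P b)).card
      ≤ (4 * M + 1).toNat ^ n * ((2 * M + 1).toNat * B ^ (n - 1)) :=
    le_trans (Finset.card_le_card hsub) (bad_card B M)
  -- real-valued bound on bad count
  have hcast4 : (((4 * M + 1).toNat : ℕ) : ℝ) = 4 * (M:ℝ) + 1 := by
    have h := Int.toNat_of_nonneg (show (0:ℤ) ≤ 4 * M + 1 by omega)
    have h2 := congrArg (fun z : ℤ => (z : ℝ)) h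
    push_cast at h2 ⊢
    linarith
  have hcast2 : (((2 * M + 1).toNat : ℕ) : ℝ) = 2 * (M:ℝ) + 1 := by
    have h := Int.toNat_of_nonneg (show (0:ℤ) ≤ 2 * M + 1 by omega)
    have h2 := congrArg (fun z : ℤ => (z : ℝ)) h
    push_cast at h2 ⊢
    linarith
  have hkb := hkey n hn
  have hbadR : ((S.filter (fun b => ¬ P b)).card : ℝ)
      ≤ (2:ℝ) ^ ((1/2 + ε/2) * (n:ℝ)^2) * (B:ℝ) ^ (n - 1) := by
    calc ((S.filter (fun b => ¬ P b)).card : ℝ)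
        ≤ (((4 * M + 1).toNat : ℕ) : ℝ) ^ n * ((((2 * M + 1).toNat : ℕ) : ℝ) * (B:ℝ) ^ (n - 1)) := by
          exact_mod_cast Nat.cast_le.mpr hbadcard
      _ = (4 * (M:ℝ) + 1) ^ n * (2 * (M:ℝ) + 1) * (B:ℝ) ^ (n - 1) := by
          rw [hcast4, hcast2]; ring
      _ ≤ (2:ℝ) ^ ((1/2 + ε/2) * (n:ℝ)^2) * (B:ℝ) ^ (n - 1) := by
          apply mul_le_mul_of_nonneg_right _ (by positivity)
          exact hkb
  -- identify the RHS bound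
  have hBsplit : (B:ℝ) ^ n = (B:ℝ) * (B:ℝ) ^ (n - 1) := by
    conv_lhs => rw [show n = (n - 1) + 1 by omega]
    rw [pow_succ]; ring
  have hBval : (2:ℝ) ^ (-(ε * (n:ℝ) ^ 2) / 2) * (B:ℝ) = (2:ℝ) ^ ((1/2 + ε/2) * (n:ℝ)^2) := by
    rw [hB, ← Real.rpow_add two_pos]
    congr 1
    ring
  have hfinal : ((S.filter (fun b => ¬ P b)).card : ℝ)
      ≤ (2:ℝ) ^ (-(ε * (n:ℝ) ^ 2) / 2) * (B:ℝ) ^ n := by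
    rw [hBsplit, ← mul_assoc, hBval]
    exact hbadR
  -- conclude
  rw [le_div_iff₀ hBpos]
  have hgood : ((S.filter P).card : ℝ) = (B:ℝ) ^ n - ((S.filter (fun b => ¬ P b)).card : ℝ) := by
    have := hsplit
    have h2 : ((S.filter P).card : ℝ) + ((S.filter (fun b => ¬ P b)).card : ℝ) = (B:ℝ) ^ n := by
      exact_mod_cast congrArg (Nat.cast : ℕ → ℝ) this
    linarith
  rw [hgood]
  nlinarith [hfinal, hBpos]
end

section
/- Let e ∈ {0,1}^n, εᵢ ∈ {−1,0,1}, and let B₁,...,Bₙ be i.i.d. uniform on {1,...,B} with B = 2^{(1/2+ε)n²}, B₀ = ∑ᵢBᵢeᵢ. For n sufficiently large, with probability at least 1 − O(2^{−εn²/2}), every nonzero vector x = (x₀; x'₀; x₁;...;xₙ) in the lattice generated by the noisy matrix (first row (B₀, −B₁−ε₁,...,−Bₙ−εₙ), identity below) with ‖x‖ ≤ 3·2^{n/2}n^{1/2} is an integer multiple of (f₀; 1; e), where f₀ = −∑ᵢεᵢeᵢ. -/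
/-!
If a lattice vector `v` is not a multiple of `(f₀; 1; e)`, some `cᵢ = eᵢ v₁ - v_{i+2}` is nonzero,
and lattice membership becomes the nontrivial linear equation `∑ bᵢ cᵢ = v₀ + ∑ εᵢ v_{i+2}` in `b`,
which at most `B^(n-1)` of the `B^n` choices of `b` satisfy. A union bound over the at most
`(2m+1)^(n+2)` integer vectors of norm `≤ m` bounds the failure probability by `(2m+1)^(n+2) / B`,
and `log₂ (2m+1) = n/2 + O(log n)` makes this at most `2^(-εn²/2)` for large `n`.
-/

open Finset
open scoped Classical

theorem card_filter_sum_mul_eq_le {ι R : Type*} [Fintype ι] [DecidableEq ι] [CommRing R]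
    [NoZeroDivisors R] [DecidableEq R] (s : Finset R) {c : ι → R} {i₀ : ι} (hc : c i₀ ≠ 0)
    (d : R) :
    #{b ∈ Fintype.piFinset fun _ => s | ∑ i, b i * c i = d} ≤ #s ^ (Fintype.card ι - 1) := by
  set restrict : (ι → R) → {j // j ≠ i₀} → R := fun b j => b j
  have hinj : Set.InjOn restrict
      ({b ∈ Fintype.piFinset fun _ => s | ∑ i, b i * c i = d} : Finset (ι → R)) := by
    intro b hb b' hb' hbb
    have hb₀ : b i₀ * c i₀ = b' i₀ * c i₀ := by
      have h := (mem_filter.1 (mem_coe.1 hb)).2.trans (mem_filter.1 (mem_coe.1 hb')).2.symm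
      rw [Fintype.sum_eq_add_sum_subtype_ne _ i₀, Fintype.sum_eq_add_sum_subtype_ne _ i₀] at h
      have hrest : ∀ j : {j // j ≠ i₀}, b j = b' j := congrFun hbb
      simp_rw [hrest] at h
      exact add_right_cancel h
    funext j
    obtain rfl | hj := eq_or_ne j i₀
    · exact mul_right_cancel₀ hc hb₀
    · exact congrFun hbb ⟨j, hj⟩
  calc #{b ∈ Fintype.piFinset fun _ => s | ∑ i, b i * c i = d}
      ≤ #(Fintype.piFinset fun _ : {j // j ≠ i₀} => s) :=
        card_le_card_of_injOn restrict (fun b hb => Fintype.mem_piFinset.2 fun j =>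
          Fintype.mem_piFinset.1 (mem_filter.1 (mem_coe.1 hb)).1 j) hinj
    _ = #s ^ (Fintype.card ι - 1) := by
        simp [Fintype.card_subtype_compl]

theorem mem_Icc_floor_of_sqrt_sum_sq_le {ι : Type*} [Fintype ι] {v : ι → ℤ} {m : ℝ}
    (h : √(∑ j, (v j : ℝ) ^ 2) ≤ m) (j : ι) : v j ∈ Icc (-⌊m⌋) ⌊m⌋ := by
  have hj : |(v j : ℝ)| ≤ m :=
    (Real.abs_le_sqrt (single_le_sum (fun j _ => sq_nonneg (v j : ℝ)) (mem_univ j))).trans h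
  rw [mem_Icc, ← abs_le]
  exact Int.le_floor.2 (by exact_mod_cast hj)

theorem card_Icc_neg_floor_le {m : ℝ} (hm : 0 ≤ m) : (#(Icc (-⌊m⌋) ⌊m⌋) : ℝ) ≤ 2 * m + 1 := by
  have hM : 0 ≤ ⌊m⌋ := Int.floor_nonneg.2 hm
  have hcard : ((#(Icc (-⌊m⌋) ⌊m⌋) : ℕ) : ℤ) = 2 * ⌊m⌋ + 1 := by
    rw [Int.card_Icc]; omega
  have hfloor := Int.floor_le m
  rw [← Int.cast_natCast, hcard]
  push_cast
  linarith

section NoisyLattice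

variable {R : Type*} [CommRing R] {n : ℕ} {b e εv : Fin n → R} {v : Fin (n + 2) → R}

theorem sum_mul_sub_eq_of_eq_sub
    (hv : v 0 = (∑ i, b i * e i) * v 1 - ∑ i : Fin n, (b i + εv i) * v i.succ.succ) :
    ∑ i, b i * (e i * v 1 - v i.succ.succ) = v 0 + ∑ i, εv i * v i.succ.succ := by
  rw [hv]
  simp only [mul_sub, add_mul, sum_sub_distrib, sum_add_distrib, sum_mul, mul_assoc]
  ring

theorem eq_smul_cons_of_eq_sub
    (hv : v 0 = (∑ i, b i * e i) * v 1 - ∑ i : Fin n, (b i + εv i) * v i.succ.succ)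
    (he : ∀ i, v i.succ.succ = e i * v 1) :
    v = v 1 • (Fin.cons (-∑ i, εv i * e i) (Fin.cons 1 e) : Fin (n + 2) → R) := by
  funext j
  induction j using Fin.cases with
  | zero =>
    have h := sum_mul_sub_eq_of_eq_sub hv
    simp only [he, sub_self, mul_zero, sum_const_zero, ← mul_assoc, ← sum_mul] at h
    simp only [Pi.smul_apply, smul_eq_mul, Fin.cons_zero]
    linear_combination -h
  | succ j =>
    induction j using Fin.cases with
    | zero => simp
    | succ i => simp [he, mul_comm]

theorem exists_sub_ne_zero_of_ne_smul
    (hv : v 0 = (∑ i, b i * e i) * v 1 - ∑ i : Fin n, (b i + εv i) * v i.succ.succ)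
    (hne : ∀ k : R, v ≠ k • (Fin.cons (-∑ i, εv i * e i) (Fin.cons 1 e) : Fin (n + 2) → R)) :
    ∃ i, e i * v 1 - v i.succ.succ ≠ 0 := by
  by_contra! h
  exact hne _ (eq_smul_cons_of_eq_sub hv fun i => (sub_eq_zero.1 (h i)).symm)

end NoisyLattice

/-- Membership of `v` in the noisy lattice is the equation for `v 0`: the basis matrix has first
row `(B₀, -B₁-ε₁, …, -Bₙ-εₙ)` above the identity. -/
def ShortVectorsAreMultiples {n : ℕ} (m : ℝ) (e εv b : Fin n → ℤ) : Prop :=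
  ∀ v : Fin (n + 2) → ℤ,
    v 0 = (∑ i, b i * e i) * v 1 - ∑ i : Fin n, (b i + εv i) * v i.succ.succ →
    v ≠ 0 → √(∑ j, (v j : ℝ) ^ 2) ≤ m →
    ∃ k : ℤ, v = k • (Fin.cons (-∑ i, εv i * e i) (Fin.cons 1 e) : Fin (n + 2) → ℤ)

theorem filter_not_shortVectorsAreMultiples_subset {n : ℕ} (m : ℝ) (e εv : Fin n → ℤ)
    (S : Finset (Fin n → ℤ)) :
    {b ∈ S | ¬ ShortVectorsAreMultiples m e εv b} ⊆
      {v ∈ Fintype.piFinset fun _ : Fin (n + 2) => Icc (-⌊m⌋) ⌊m⌋ |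
          ∃ i, e i * v 1 - v i.succ.succ ≠ 0}.biUnion fun v => {b ∈ S | ∑ i, b i * (e i * v 1 - v i.succ.succ) =
          v 0 + ∑ i, εv i * v i.succ.succ} := by
  intro b hb
  obtain ⟨hbS, hbad⟩ := mem_filter.1 hb
  simp only [ShortVectorsAreMultiples, not_forall, not_exists] at hbad
  obtain ⟨v, hv, -, hvm, hne⟩ := hbad
  exact mem_biUnion.2 ⟨v,
    mem_filter.2 ⟨Fintype.mem_piFinset.2 (mem_Icc_floor_of_sqrt_sum_sq_le hvm),
      exists_sub_ne_zero_of_ne_smul hv hne⟩,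
    mem_filter.2 ⟨hbS, sum_mul_sub_eq_of_eq_sub hv⟩⟩

theorem card_filter_not_shortVectorsAreMultiples_le {n : ℕ} {m : ℝ} (hm : 0 ≤ m)
    (e εv : Fin n → ℤ) (B : ℕ) :
    (#{b ∈ Fintype.piFinset fun _ => Icc (1 : ℤ) B | ¬ ShortVectorsAreMultiples m e εv b} : ℝ) ≤
      (2 * m + 1) ^ (n + 2) * (B : ℝ) ^ (n - 1) := by
  set V := {v ∈ Fintype.piFinset fun _ : Fin (n + 2) => Icc (-⌊m⌋) ⌊m⌋ |
    ∃ i, e i * v 1 - v i.succ.succ ≠ 0}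
  have hcount : #{b ∈ Fintype.piFinset fun _ => Icc (1 : ℤ) B |
      ¬ ShortVectorsAreMultiples m e εv b} ≤ #V * B ^ (n - 1) := by
    refine (card_le_card (filter_not_shortVectorsAreMultiples_subset m e εv _)).trans
      (card_biUnion_le_card_mul _ _ _ fun v hv => ?_)
    obtain ⟨i₀, hi₀⟩ := (mem_filter.1 hv).2
    simpa using card_filter_sum_mul_eq_le (Icc (1 : ℤ) B)
      (c := fun i => e i * v 1 - v i.succ.succ) hi₀ _
  have hV : (#V : ℝ) ≤ (2 * m + 1) ^ (n + 2) :=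
    calc (#V : ℝ) ≤ #(Fintype.piFinset fun _ : Fin (n + 2) => Icc (-⌊m⌋) ⌊m⌋) := by
          exact_mod_cast card_filter_le _ _
      _ = (#(Icc (-⌊m⌋) ⌊m⌋) : ℝ) ^ (n + 2) := by simp
      _ ≤ (2 * m + 1) ^ (n + 2) := pow_le_pow_left₀ (by positivity) (card_Icc_neg_floor_le hm) _
  calc _ ≤ (#V : ℝ) * (B : ℝ) ^ (n - 1) := by exact_mod_cast hcount
    _ ≤ _ := by gcongr

theorem eventually_natCast_le_two_rpow_mul {δ : ℝ} (hδ : 0 < δ) :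
    ∀ᶠ n : ℕ in Filter.atTop, (n : ℝ) ≤ 2 ^ (δ * n) := by
  have hr : 1 < (2 : ℝ) ^ δ := Real.one_lt_rpow one_lt_two hδ
  filter_upwards [(tendsto_pow_const_div_const_pow_of_one_lt 1 hr).eventually_le_const one_pos]
    with n hn
  rwa [pow_one, div_le_one (by positivity), ← Real.rpow_natCast, ← Real.rpow_mul zero_le_two]
    at hn

theorem eventually_two_mul_add_one_le_two_rpow {ε : ℝ} (hε : 0 < ε) :
    ∀ᶠ n : ℕ in Filter.atTop,
      2 * (3 * (2 : ℝ) ^ ((n : ℝ) / 2) * (n : ℝ) ^ ((1 : ℝ) / 2)) + 1 ≤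
        2 ^ ((n : ℝ) / 2 + ε / 4 * n) := by
  filter_upwards [eventually_natCast_le_two_rpow_mul (by positivity : 0 < ε / 8),
    Filter.eventually_ge_atTop 7] with n hn h7
  have h7' : (7 : ℝ) ≤ n := by exact_mod_cast h7
  have ha : 1 ≤ (2 : ℝ) ^ ((n : ℝ) / 2) := Real.one_le_rpow one_le_two (by positivity)
  have hr : 1 ≤ (n : ℝ) ^ ((1 : ℝ) / 2) := Real.one_le_rpow (by linarith) (by norm_num)
  have hrn : (n : ℝ) ^ ((1 : ℝ) / 2) ≤ n := Real.rpow_le_self_of_one_le (by linarith) (by norm_num)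
  have h7r : 7 * (n : ℝ) ^ ((1 : ℝ) / 2) ≤ 2 ^ (ε / 4 * n) := by
    rw [show ε / 4 * (n : ℝ) = ε / 8 * n + ε / 8 * n by ring, Real.rpow_add two_pos]
    exact mul_le_mul (by linarith) (by linarith) (by positivity) (by positivity)
  calc _ ≤ 7 * (n : ℝ) ^ ((1 : ℝ) / 2) * (2 : ℝ) ^ ((n : ℝ) / 2) := by nlinarith
    _ ≤ 2 ^ (ε / 4 * n) * 2 ^ ((n : ℝ) / 2) := by gcongr
    _ = 2 ^ ((n : ℝ) / 2 + ε / 4 * n) := by rw [← Real.rpow_add two_pos, add_comm]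

theorem eventually_two_mul_add_one_pow_le {ε : ℝ} (hε : 0 < ε) :
    ∀ᶠ n : ℕ in Filter.atTop,
      (2 * (3 * (2 : ℝ) ^ ((n : ℝ) / 2) * (n : ℝ) ^ ((1 : ℝ) / 2)) + 1) ^ (n + 2) ≤
        2 ^ ((1 / 2 + ε / 2) * (n : ℝ) ^ 2) := by
  filter_upwards [eventually_two_mul_add_one_le_two_rpow hε,
    tendsto_natCast_atTop_atTop.eventually_ge_atTop (4 / ε + 2)] with n hm hn
  have hεn : 4 ≤ ε * (n - 2) := by
    rw [← div_le_iff₀' hε]; linarith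
  calc _ ≤ ((2 : ℝ) ^ ((n : ℝ) / 2 + ε / 4 * n)) ^ (n + 2) := pow_le_pow_left₀ (by positivity) hm _
    _ = 2 ^ (((n : ℝ) / 2 + ε / 4 * n) * (n + 2)) := by
        rw [← Real.rpow_natCast, ← Real.rpow_mul zero_le_two]; push_cast; rfl
    _ ≤ _ := by
        apply Real.rpow_le_rpow_of_exponent_le one_le_two
        nlinarith [mul_le_mul_of_nonneg_left hεn (Nat.cast_nonneg n : (0 : ℝ) ≤ n)]

theorem one_sub_le_card_filter_div {α : Type*} {S : Finset α} {p : α → Prop} [DecidablePred p]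
    {δ : ℝ} (hS : S.Nonempty) (h : (#{a ∈ S | ¬ p a} : ℝ) ≤ δ * #S) :
    1 - δ ≤ #{a ∈ S | p a} / #S := by
  have hsplit : (#{a ∈ S | p a} : ℝ) + #{a ∈ S | ¬ p a} = #S := by
    exact_mod_cast card_filter_add_card_filter_not p
  rw [le_div_iff₀ (by simpa using hS.card_pos)]
  linarith

/-- Noisy version: with noise `εᵢ ∈ {-1,0,1}` added to the `Bᵢ` in the lattice matrix and
`B = 2^((1/2+ε)n²)`, for `n` large, with probability at least `1 - C·2^(-εn²/2)` every nonzero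
vector of the noisy lattice of norm at most `3·2^(n/2)·n^(1/2)` is an integer multiple of
`(f₀; 1; e)` where `f₀ = -∑ εᵢeᵢ`. -/
theorem noisy_subset_sum_lattice_success (ε : ℝ) (hε : 0 < ε) :
    ∃ C : ℝ, 0 < C ∧ ∃ n₀ : ℕ, ∀ n : ℕ, n₀ ≤ n →
      ∀ e : Fin n → ℤ, (∀ i, e i = 0 ∨ e i = 1) →
      ∀ εv : Fin n → ℤ, (∀ i, εv i = -1 ∨ εv i = 0 ∨ εv i = 1) →
      ∀ B : ℕ, (B : ℝ) = (2 : ℝ) ^ ((1 / 2 + ε) * (n : ℝ) ^ 2) →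
      (1 : ℝ) - C * (2 : ℝ) ^ (-(ε * (n : ℝ) ^ 2) / 2) ≤
        ((Finset.filter (fun b : Fin n → ℤ =>
            ∀ v : Fin (n + 2) → ℤ,
              v 0 = (∑ i, b i * e i) * v 1 - ∑ i : Fin n, (b i + εv i) * v i.succ.succ →
              v ≠ 0 →
              Real.sqrt (∑ j, ((v j : ℤ) : ℝ) ^ 2) ≤
                3 * (2 : ℝ) ^ ((n : ℝ) / 2) * (n : ℝ) ^ ((1 : ℝ) / 2) →
              ∃ k : ℤ,
                v = k • (Fin.cons (-∑ i, εv i * e i) (Fin.cons 1 e) : Fin (n + 2) → ℤ))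
          (Fintype.piFinset fun _ : Fin n => Finset.Icc (1 : ℤ) (B : ℤ))).card : ℝ) /
          (B : ℝ) ^ n := by
  obtain ⟨n₀, hn₀⟩ := Filter.eventually_atTop.1
    ((eventually_two_mul_add_one_pow_le hε).and (Filter.eventually_ge_atTop 1))
  refine ⟨1, one_pos, n₀, fun n hn e _ εv _ B hB => ?_⟩
  obtain ⟨hpow, hn1⟩ := hn₀ n hn
  set m := 3 * (2 : ℝ) ^ ((n : ℝ) / 2) * (n : ℝ) ^ ((1 : ℝ) / 2)
  have hBpos : (0 : ℝ) < B := hB ▸ by positivity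
  have hcard : (#(Fintype.piFinset fun _ : Fin n => Icc (1 : ℤ) B) : ℝ) = (B : ℝ) ^ n := by simp
  have hBexp : (2 : ℝ) ^ ((1 / 2 + ε / 2) * (n : ℝ) ^ 2) = 2 ^ (-(ε * (n : ℝ) ^ 2) / 2) * B := by
    rw [hB, ← Real.rpow_add two_pos]; ring_nf
  rw [one_mul, ← hcard]
  refine one_sub_le_card_filter_div (p := ShortVectorsAreMultiples m e εv)
    (Fintype.piFinset_nonempty.2 fun _ => nonempty_Icc.2 (by exact_mod_cast hBpos)) ?_
  calc _ ≤ (2 * m + 1) ^ (n + 2) * (B : ℝ) ^ (n - 1) :=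
        card_filter_not_shortVectorsAreMultiples_le (by positivity) e εv B
    _ ≤ 2 ^ ((1 / 2 + ε / 2) * (n : ℝ) ^ 2) * (B : ℝ) ^ (n - 1) := by gcongr
    _ = _ := by rw [hBexp, hcard, mul_assoc, ← pow_succ', Nat.sub_add_cancel hn1]
end
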